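/- Let k be a quasi-complete totally ordered rational tropical semifield and let M be a finitely generated straight pre-reflexive k-module. Then M is reflexive. -/

import Mathlib

/-! # Tropical semifields and tropical modules -/

/-- A tropical semifield: a commutative semiring with idempotent addition
(`⊕` is `+`, `⊙` is `*`, the zero element `−∞` is `0`, the unity is `1`)
in which every nonzero element has a multiplicative inverse. -/
class TropSemifield (k : Type*) extends CommSemiring k where
  add_idem : ∀ a : k, a + a = a
  exists_inv : ∀ a : k, a ≠ 0 → ∃ b : k, a * b = 1

/-- A tropical semigroup: commutative idempotent monoid, written additively
(the zero element is `−∞`). -/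
class TropSemigroup (M : Type*) extends AddCommMonoid M where
  add_idem : ∀ v : M, v + v = v

/-- A module over a tropical semifield. -/
class TropModule (k : Type*) (M : Type*) [TropSemifield k] [TropSemigroup M] extends
    SMul k M where
  mul_smul : ∀ (a b : k) (v : M), (a * b) • v = a • b • v
  one_smul : ∀ v : M, (1 : k) • v = v
  add_smul : ∀ (a b : k) (v : M), (a + b) • v = a • v + b • v
  smul_add : ∀ (a : k) (v w : M), a • (v + w) = a • v + a • w
  zero_smul : ∀ v : M, (0 : k) • v = 0
  smul_zero : ∀ a : k, a • (0 : M) = 0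

/-- The canonical partial order `v ≤ w ↔ v ⊕ w = w`. -/
def tle {M : Type*} [Add M] (v w : M) : Prop := v + w = w

/-- Strict version of the canonical order. -/
def tlt {M : Type*} [Add M] (v w : M) : Prop := tle v w ∧ v ≠ w

/-- The canonical order of `k` is total. -/
def TotallyOrderedTSF (k : Type*) [TropSemifield k] : Prop :=
  ∀ a b : k, tle a b ∨ tle b a

/-- Every nonempty subset of `k` admits an infimum. -/
def QuasiCompleteTSF (k : Type*) [TropSemifield k] : Prop :=
  ∀ S : Set k, S.Nonempty →
    ∃ c : k, (∀ x ∈ S, tle c x) ∧ ∀ d : k, (∀ x ∈ S, tle d x) → tle d c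

/-- `k` is rational: `m`-th roots exist and `k` has no maximum element. -/
def RationalTSF (k : Type*) [TropSemifield k] : Prop :=
  (∀ (a : k) (m : ℕ), m ≠ 0 → ∃ b : k, b ^ m = a) ∧ ∀ a : k, ∃ b : k, tlt a b

instance (priority := 100) TropSemifield.toTropSemigroup (k : Type*) [TropSemifield k] :
    TropSemigroup k :=
  { (inferInstance : AddCommMonoid k) with add_idem := TropSemifield.add_idem }

instance TropModule.self (k : Type*) [TropSemifield k] : TropModule k k :=
  { (inferInstance : SMul k k) with
    mul_smul := fun a b v => mul_assoc a b v
    one_smul := fun v => one_mul v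
    add_smul := fun a b v => add_mul a b v
    smul_add := fun a v w => mul_add a v w
    zero_smul := fun v => zero_mul v
    smul_zero := fun a => mul_zero a }

instance TropSemigroup.pi {ι : Type*} (M : Type*) [TropSemigroup M] :
    TropSemigroup (ι → M) :=
  { Pi.addCommMonoid with add_idem := fun v => funext fun i => TropSemigroup.add_idem (v i) }

instance TropModule.pi (k : Type*) {ι : Type*} (M : Type*) [TropSemifield k] [TropSemigroup M]
    [TropModule k M] : TropModule k (ι → M) where
  smul a v := fun i => a • v i
  mul_smul a b v := funext fun i => TropModule.mul_smul a b (v i)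
  one_smul v := funext fun i => TropModule.one_smul (v i)
  add_smul a b v := funext fun i => TropModule.add_smul a b (v i)
  smul_add a v w := funext fun i => TropModule.smul_add a (v i) (w i)
  zero_smul v := funext fun i => TropModule.zero_smul (v i)
  smul_zero a := funext fun i => TropModule.smul_zero (a := a)

/-! ## Homomorphisms of tropical modules -/

/-- A homomorphism of `k`-modules. -/
structure TropHom (k : Type*) (M : Type*) (N : Type*) [TropSemifield k] [TropSemigroup M]
    [TropModule k M] [TropSemigroup N] [TropModule k N] where
  toFun : M → N
  map_zero' : toFun 0 = 0
  map_add' : ∀ v w : M, toFun (v + w) = toFun v + toFun w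
  map_smul' : ∀ (a : k) (v : M), toFun (a • v) = a • toFun v

namespace TropHom

variable {k M N : Type*} [TropSemifield k] [TropSemigroup M] [TropModule k M]
  [TropSemigroup N] [TropModule k N]

theorem ext' {f g : TropHom k M N} (h : ∀ v, f.toFun v = g.toFun v) : f = g := by
  cases f; cases g
  simp only [mk.injEq]
  exact funext h

instance : Zero (TropHom k M N) :=
  ⟨⟨fun _ => 0, rfl, fun _ _ => (add_zero (0 : N)).symm,
    fun a _ => (TropModule.smul_zero (M := N) a).symm⟩⟩

instance : Add (TropHom k M N) :=
  ⟨fun f g =>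
    { toFun := fun v => f.toFun v + g.toFun v
      map_zero' := by
        show f.toFun 0 + g.toFun 0 = 0
        rw [f.map_zero', g.map_zero', add_zero]
      map_add' := fun v w => by
        show f.toFun (v + w) + g.toFun (v + w) =
          (f.toFun v + g.toFun v) + (f.toFun w + g.toFun w)
        rw [f.map_add', g.map_add', add_add_add_comm]
      map_smul' := fun a v => by
        show f.toFun (a • v) + g.toFun (a • v) = a • (f.toFun v + g.toFun v)
        rw [f.map_smul', g.map_smul', TropModule.smul_add] }⟩

instance : SMul k (TropHom k M N) :=
  ⟨fun a f =>
    { toFun := fun v => a • f.toFun v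
      map_zero' := by
        show a • f.toFun 0 = 0
        rw [f.map_zero', TropModule.smul_zero]
      map_add' := fun v w => by
        show a • f.toFun (v + w) = a • f.toFun v + a • f.toFun w
        rw [f.map_add', TropModule.smul_add]
      map_smul' := fun b v => by
        show a • f.toFun (b • v) = b • (a • f.toFun v)
        rw [f.map_smul', ← TropModule.mul_smul, ← TropModule.mul_smul, mul_comm a b] }⟩

instance : TropSemigroup (TropHom k M N) where
  add := (· + ·)
  zero := 0
  add_assoc f g h := ext' fun v => add_assoc (f.toFun v) (g.toFun v) (h.toFun v)
  zero_add f := ext' fun v => zero_add (f.toFun v)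
  add_zero f := ext' fun v => add_zero (f.toFun v)
  add_comm f g := ext' fun v => add_comm (f.toFun v) (g.toFun v)
  nsmul := nsmulRec
  add_idem f := ext' fun v => TropSemigroup.add_idem (f.toFun v)

instance : TropModule k (TropHom k M N) where
  smul := (· • ·)
  mul_smul a b f := ext' fun v => TropModule.mul_smul a b (f.toFun v)
  one_smul f := ext' fun v => TropModule.one_smul (f.toFun v)
  add_smul a b f := ext' fun v => TropModule.add_smul a b (f.toFun v)
  smul_add a f g := ext' fun v => TropModule.smul_add a (f.toFun v) (g.toFun v)
  zero_smul f := ext' fun v => TropModule.zero_smul (f.toFun v)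
  smul_zero a := ext' fun v => TropModule.smul_zero (M := N) a

end TropHom

/-- The canonical map `M → (M∨)∨`, `v ↦ (ξ ↦ ⟨v, ξ⟩)`. -/
def iotaFun (k : Type*) (M : Type*) [TropSemifield k] [TropSemigroup M] [TropModule k M] :
    M → TropHom k (TropHom k M k) k :=
  fun v => ⟨fun ξ => ξ.toFun v, rfl, fun ξ η => rfl, fun a ξ => rfl⟩

/-! ## Order-theoretic notions -/

/-- `z` is the infimum of `v` and `w` w.r.t. the canonical order. -/
def IsTInf {M : Type*} [Add M] (v w z : M) : Prop :=
  tle z v ∧ tle z w ∧ ∀ y : M, tle y v → tle y w → tle y z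

/-- A tropical module is straight if it is a finitely distributive ordered lattice. -/
def Straight (M : Type*) [Add M] : Prop :=
  (∀ v w : M, ∃ z : M, IsTInf v w z) ∧
    ∀ v₁ v₂ w z₁ z₂ : M, IsTInf v₁ w z₁ → IsTInf v₂ w z₂ → IsTInf (v₁ + v₂) w (z₁ + z₂)

/-- Infimum of `v` and `w` within the subset `N`. -/
def IsTInfOn {M : Type*} [Add M] (N : Set M) (v w z : M) : Prop :=
  tle z v ∧ tle z w ∧ ∀ y ∈ N, tle y v → tle y w → tle y z

/-- A submodule (viewed as a subset) is straight. -/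
def StraightSet {M : Type*} [Add M] (N : Set M) : Prop :=
  (∀ v ∈ N, ∀ w ∈ N, ∃ z ∈ N, IsTInfOn N v w z) ∧
    ∀ v₁ ∈ N, ∀ v₂ ∈ N, ∀ w ∈ N, ∀ z₁ ∈ N, ∀ z₂ ∈ N,
      IsTInfOn N v₁ w z₁ → IsTInfOn N v₂ w z₂ → IsTInfOn N (v₁ + v₂) w (z₁ + z₂)

/-! ## Generation, bases, extremal elements -/

/-- `S` generates the `k`-module `M`. -/
def TGenerates (k : Type*) {M : Type*} [TropSemifield k] [TropSemigroup M] [TropModule k M]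
    (S : Set M) : Prop :=
  ∀ v : M, ∃ (r : ℕ) (a : Fin r → k) (x : Fin r → M), (∀ i, x i ∈ S) ∧ v = ∑ i, a i • x i

/-- `M` is finitely generated. -/
def TFG (k : Type*) (M : Type*) [TropSemifield k] [TropSemigroup M] [TropModule k M] : Prop :=
  ∃ S : Finset M, TGenerates k (↑S : Set M)

/-- A basis: a generating set no proper subset of which generates. -/
def TBasis (k : Type*) {M : Type*} [TropSemifield k] [TropSemigroup M] [TropModule k M]
    (S : Set M) : Prop :=
  TGenerates k S ∧ ∀ T : Set M, T ⊂ S → ¬ TGenerates k T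

/-- `S` generates the subset `N` (viewed as a submodule of `M`). -/
def TGeneratesOn (k : Type*) {M : Type*} [TropSemifield k] [TropSemigroup M] [TropModule k M]
    (N S : Set M) : Prop :=
  ∀ v ∈ N, ∃ (r : ℕ) (a : Fin r → k) (x : Fin r → M), (∀ i, x i ∈ S) ∧ v = ∑ i, a i • x i

/-- A basis of the submodule `N ⊆ M`. -/
def TBasisOn (k : Type*) {M : Type*} [TropSemifield k] [TropSemigroup M] [TropModule k M]
    (N S : Set M) : Prop :=
  S ⊆ N ∧ TGeneratesOn k N S ∧ ∀ T : Set M, T ⊂ S → ¬ TGeneratesOn k N T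

/-- An extremal element. -/
def TExtremal {M : Type*} [Add M] [Zero M] (e : M) : Prop :=
  e ≠ 0 ∧ ∀ v w : M, v + w = e → v = e ∨ w = e

/-- The ray `k ⊙ e` generated by an element. -/
def tray (k : Type*) {M : Type*} [TropSemifield k] [TropSemigroup M] [TropModule k M]
    (e : M) : Set M :=
  Set.range fun a : k => a • e

/-- The set of extremal rays of `M`. -/
def extRays (k : Type*) (M : Type*) [TropSemifield k] [TropSemigroup M] [TropModule k M] :
    Set (Set M) :=
  {R : Set M | ∃ e : M, TExtremal e ∧ R = tray k e}

/-- The dimension of a straight reflexive module: the number of extremal rays. -/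
noncomputable def tdim (k : Type*) (M : Type*) [TropSemifield k] [TropSemigroup M]
    [TropModule k M] : ℕ :=
  (extRays k M).ncard

/-! ## Further notions on homomorphisms -/

/-- A lightly surjective homomorphism. -/
def LightlySurjective {k M N : Type*} [TropSemifield k] [TropSemigroup M] [TropModule k M]
    [TropSemigroup N] [TropModule k N] (α : TropHom k M N) : Prop :=
  ∀ w : N, ∃ v : M, tle w (α.toFun v)

/-- A lattice-preserving homomorphism. -/
def LatticePreserving {k M N : Type*} [TropSemifield k] [TropSemigroup M] [TropModule k M]
    [TropSemigroup N] [TropModule k N] (α : TropHom k M N) : Prop :=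
  ∀ v w : M, ∀ x : N, tle x (α.toFun v) → tle x (α.toFun w) →
    ∃ y : M, tle y v ∧ tle y w ∧ tle x (α.toFun y)

/-- The inclusion of the subset `N` into the ambient module is lattice-preserving. -/
def LatPresSet {M : Type*} [Add M] (N : Set M) : Prop :=
  ∀ v ∈ N, ∀ w ∈ N, ∀ x : M, tle x v → tle x w → ∃ y ∈ N, tle y v ∧ tle y w ∧ tle x y

/-- `η` is the dual element of `e`: `⟨e,η⟩ = 0` and
`⟨v,η⟩ ⊙ ⟨e,ξ⟩ ≤ ⟨v,ξ⟩` for all `v`, `ξ`. -/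
def IsDualElement {k M : Type*} [TropSemifield k] [TropSemigroup M] [TropModule k M]
    (e : M) (η : TropHom k M k) : Prop :=
  η.toFun e = 1 ∧ ∀ (v : M) (ξ : TropHom k M k), tle (η.toFun v * ξ.toFun e) (ξ.toFun v)

/-! ## Locators -/

/-- A locator of `M`: a lower-saturated subsemigroup of `(M, ⊕)` that generates `M`. -/
structure IsLocator (k : Type*) {M : Type*} [TropSemifield k] [TropSemigroup M] [TropModule k M]
    (S : Set M) : Prop where
  lower : ∀ v w : M, tle v w → w ∈ S → v ∈ S
  add_mem : ∀ v ∈ S, ∀ w ∈ S, v + w ∈ S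
  generates : TGenerates k S

/-- The multiplicative inverse `⊘a` (junk value `−∞` at `−∞`). -/
noncomputable def tinv {k : Type*} [TropSemifield k] (a : k) : k := by
  classical exact if h : a = 0 then 0 else Classical.choose (TropSemifield.exists_inv a h)

/-- Scalar multiplication on locators: `a ⊙̌ S = (⊘a) ⊙ S` for `a ≠ −∞`, `(−∞) ⊙̌ S = M`. -/
noncomputable def locSMul {k M : Type*} [TropSemifield k] [TropSemigroup M] [TropModule k M]
    (a : k) (S : Set M) : Set M := by
  classical exact if a = 0 then Set.univ else (fun v => tinv a • v) '' S

/-- `U` is the infimum of the locators `S`, `T` in `Loc(M)` (whose canonical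
order is reverse inclusion, the sum being intersection). -/
def IsLocInf (k : Type*) {M : Type*} [TropSemifield k] [TropSemigroup M] [TropModule k M]
    (S T U : Set M) : Prop :=
  IsLocator k U ∧ S ⊆ U ∧ T ⊆ U ∧
    ∀ W : Set M, IsLocator k W → S ⊆ W → T ⊆ W → U ⊆ W

/-! ## Submodules -/

/-- A subset of a `k`-module which is a submodule. -/
structure IsTSubmodule (k : Type*) {M : Type*} [TropSemifield k] [TropSemigroup M]
    [TropModule k M] (N : Set M) : Prop where
  zero_mem : (0 : M) ∈ N
  add_mem : ∀ v ∈ N, ∀ w ∈ N, v + w ∈ N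
  smul_mem : ∀ (a : k), ∀ v ∈ N, a • v ∈ N

/-- A bundled submodule of a `k`-module. -/
structure TSub (k : Type*) (M : Type*) [TropSemifield k] [TropSemigroup M] [TropModule k M] where
  carrier : Set M
  zero_mem : (0 : M) ∈ carrier
  add_mem : ∀ v ∈ carrier, ∀ w ∈ carrier, v + w ∈ carrier
  smul_mem : ∀ (a : k), ∀ v ∈ carrier, a • v ∈ carrier

instance TSub.instZero {k M : Type*} [TropSemifield k] [TropSemigroup M] [TropModule k M]
    (N : TSub k M) : Zero ↥N.carrier :=
  ⟨⟨0, N.zero_mem⟩⟩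

instance TSub.instAdd {k M : Type*} [TropSemifield k] [TropSemigroup M] [TropModule k M]
    (N : TSub k M) : Add ↥N.carrier :=
  ⟨fun v w => ⟨v.1 + w.1, N.add_mem v.1 v.2 w.1 w.2⟩⟩

instance TSub.instSMul {k M : Type*} [TropSemifield k] [TropSemigroup M] [TropModule k M]
    (N : TSub k M) : SMul k ↥N.carrier :=
  ⟨fun a v => ⟨a • v.1, N.smul_mem a v.1 v.2⟩⟩

instance TSub.semigroup {k M : Type*} [TropSemifield k] [TropSemigroup M] [TropModule k M]
    (N : TSub k M) : TropSemigroup ↥N.carrier where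
  add := (· + ·)
  zero := 0
  add_assoc a b c := Subtype.ext (add_assoc a.1 b.1 c.1)
  zero_add a := Subtype.ext (zero_add a.1)
  add_zero a := Subtype.ext (add_zero a.1)
  add_comm a b := Subtype.ext (add_comm a.1 b.1)
  nsmul := nsmulRec
  add_idem a := Subtype.ext (TropSemigroup.add_idem a.1)

instance TSub.module {k M : Type*} [TropSemifield k] [TropSemigroup M] [TropModule k M]
    (N : TSub k M) : TropModule k ↥N.carrier where
  smul := (· • ·)
  mul_smul a b v := Subtype.ext (TropModule.mul_smul a b v.1)
  one_smul v := Subtype.ext (TropModule.one_smul v.1)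
  add_smul a b v := Subtype.ext (TropModule.add_smul a b v.1)
  smul_add a v w := Subtype.ext (TropModule.smul_add a v.1 w.1)
  zero_smul v := Subtype.ext (TropModule.zero_smul v.1)
  smul_zero a := Subtype.ext (TropModule.smul_zero (M := M) a)

/-! ## Linear combinations -/

theorem tsmul_sum {k M : Type*} [TropSemifield k] [TropSemigroup M] [TropModule k M]
    (a : k) {ι : Type*} (s : Finset ι) (f : ι → M) :
    a • (∑ i ∈ s, f i) = ∑ i ∈ s, a • f i := by
  classical
  induction s using Finset.induction_on with
  | empty => simpa using TropModule.smul_zero (M := M) a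
  | insert _ _ h ih => rw [Finset.sum_insert h, Finset.sum_insert h, TropModule.smul_add, ih]

/-- The homomorphism `kⁿ → M` sending the `i`-th standard basis element to `e i`. -/
def linComb {k M : Type*} [TropSemifield k] [TropSemigroup M] [TropModule k M] {n : ℕ}
    (e : Fin n → M) : TropHom k (Fin n → k) M where
  toFun v := ∑ i, v i • e i
  map_zero' :=
    (Finset.sum_congr rfl fun i _ => TropModule.zero_smul (e i)).trans Finset.sum_const_zero
  map_add' v w := by
    rw [← Finset.sum_add_distrib]
    exact Finset.sum_congr rfl fun i _ => TropModule.add_smul (v i) (w i) (e i)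
  map_smul' a v := by
    rw [tsmul_sum]
    exact Finset.sum_congr rfl fun i _ => TropModule.mul_smul a (v i) (e i)

/-- The homomorphism `M → kⁿ` induced by an `n`-tuple of elements of `M∨`. -/
def dualTuple {k M : Type*} [TropSemifield k] [TropSemigroup M] [TropModule k M] {n : ℕ}
    (η : Fin n → TropHom k M k) : TropHom k M (Fin n → k) where
  toFun v := fun i => (η i).toFun v
  map_zero' := funext fun i => (η i).map_zero'
  map_add' v w := funext fun i => (η i).map_add' v w
  map_smul' a v := funext fun i => (η i).map_smul' a v

/-!
Every element of a minimal finite generating set `S` of `M` is extremal: in a decomposition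
`e = x ⊕ y`, if `e` has the unit as coefficient in `x ⊕ y`, total order makes it its
coefficient in `x` or in `y`; otherwise pre-reflexivity puts `e` in the span of `S ∖ {e}`. For an extremal `e`, the largest
`a` with `a ⊙ e ≤ v` exists by quasi-completeness, and straightness makes `v ↦ a` additive,
so it is a dual element `η_e`. Then `v = ⊕_{e ∈ S} η_e(v) ⊙ e`, hence
`ξ = ⊕_{e ∈ S} ξ(e) ⊙ η_e` for every `ξ ∈ M∨`, and `φ ∈ (M∨)∨` is the image of
`⊕_{e ∈ S} φ(η_e) ⊙ e`.
-/

section TropicalOrder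

variable {k M N : Type*} [TropSemifield k] [TropSemigroup M] [TropModule k M]
  [TropSemigroup N] [TropModule k N]

theorem tle_refl (v : M) : tle v v := TropSemigroup.add_idem v

theorem tle.trans {u v w : M} (h₁ : tle u v) (h₂ : tle v w) : tle u w := by
  unfold tle at *
  rw [← h₂, ← add_assoc, h₁]

theorem tle.antisymm {v w : M} (h₁ : tle v w) (h₂ : tle w v) : v = w := by
  unfold tle at *
  rw [← h₁, add_comm, h₂]

theorem tle_add_left (v w : M) : tle v (v + w) := by
  unfold tle
  rw [← add_assoc, TropSemigroup.add_idem]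

theorem tle_add_right (v w : M) : tle w (v + w) :=
  add_comm w v ▸ tle_add_left w v

theorem add_tle {u v w : M} (h₁ : tle v u) (h₂ : tle w u) : tle (v + w) u := by
  unfold tle at *
  rw [add_assoc, h₂, h₁]

theorem zero_tle (v : M) : tle (0 : M) v := zero_add v

theorem tle.smul_right {a b : k} (h : tle a b) (v : M) : tle (a • v) (b • v) := by
  unfold tle at *
  rw [← TropModule.add_smul, h]

theorem tle.smul_left (a : k) {v w : M} (h : tle v w) : tle (a • v) (a • w) := by
  unfold tle at *
  rw [← TropModule.smul_add, h]

theorem tle.mul_right {a b : k} (h : tle a b) (c : k) : tle (a * c) (b * c) :=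
  h.smul_right c

theorem tle_sum_of_mem {ι : Type*} {t : Finset ι} (f : ι → M) {i : ι} (hi : i ∈ t) :
    tle (f i) (∑ j ∈ t, f j) := by
  classical
  rw [← Finset.add_sum_erase t f hi]
  exact tle_add_left _ _

theorem sum_tle {ι : Type*} {t : Finset ι} {f : ι → M} {u : M} (h : ∀ i ∈ t, tle (f i) u) :
    tle (∑ i ∈ t, f i) u := by
  classical
  induction t using Finset.induction_on with
  | empty => exact zero_tle u
  | insert i t hi ih =>
    rw [Finset.sum_insert hi]
    exact add_tle (h i (Finset.mem_insert_self i t))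
      (ih fun j hj => h j (Finset.mem_insert_of_mem hj))

theorem sum_tle_sum {ι : Type*} {t : Finset ι} {f g : ι → M}
    (h : ∀ i ∈ t, tle (f i) (g i)) : tle (∑ i ∈ t, f i) (∑ i ∈ t, g i) :=
  sum_tle fun i hi => (h i hi).trans (tle_sum_of_mem g hi)

theorem sum_tsmul {ι : Type*} (t : Finset ι) (f : ι → k) (v : M) :
    (∑ i ∈ t, f i) • v = ∑ i ∈ t, f i • v := by
  classical
  induction t using Finset.induction_on with
  | empty => exact TropModule.zero_smul v
  | insert i t hi ih => rw [Finset.sum_insert hi, Finset.sum_insert hi, TropModule.add_smul, ih]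

theorem TropHom.monotone (f : TropHom k M N) {v w : M} (h : tle v w) :
    tle (f.toFun v) (f.toFun w) := by
  unfold tle at *
  rw [← f.map_add', h]

theorem TropHom.map_sum (f : TropHom k M N) {ι : Type*} (t : Finset ι) (g : ι → M) :
    f.toFun (∑ i ∈ t, g i) = ∑ i ∈ t, f.toFun (g i) := by
  classical
  induction t using Finset.induction_on with
  | empty => exact f.map_zero'
  | insert i t hi ih => rw [Finset.sum_insert hi, Finset.sum_insert hi, f.map_add', ih]

theorem TropHom.sum_toFun {ι : Type*} (t : Finset ι) (f : ι → TropHom k M N) (v : M) :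
    (∑ i ∈ t, f i).toFun v = ∑ i ∈ t, (f i).toFun v := by
  classical
  induction t using Finset.induction_on with
  | empty => rfl
  | insert i t hi ih => rw [Finset.sum_insert hi, Finset.sum_insert hi, ← ih]; rfl

end TropicalOrder

section Inverse

variable {k M : Type*} [TropSemifield k] [TropSemigroup M] [TropModule k M]

theorem mul_tinv {a : k} (h : a ≠ 0) : a * tinv a = 1 := by
  unfold tinv
  rw [dif_neg h]
  exact Classical.choose_spec (TropSemifield.exists_inv a h)

theorem tle_mul_tinv_iff {a b c : k} (hc : c ≠ 0) : tle a (b * tinv c) ↔ tle (a * c) b := by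
  constructor
  · intro h
    simpa only [mul_assoc, mul_comm (tinv c), mul_tinv hc, mul_one] using h.mul_right c
  · intro h
    simpa only [mul_assoc, mul_tinv hc, mul_one] using h.mul_right (tinv c)

theorem smul_tinv_smul {a : k} (ha : a ≠ 0) (v : M) : a • tinv a • v = v := by
  rw [← TropModule.mul_smul, mul_tinv ha, TropModule.one_smul]

theorem tinv_smul_smul {a : k} (ha : a ≠ 0) (v : M) : tinv a • a • v = v := by
  rw [← TropModule.mul_smul, mul_comm, mul_tinv ha, TropModule.one_smul]

end Inverse

section TotalOrder

variable {k : Type*} [TropSemifield k]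

theorem TotallyOrderedTSF.add_eq_or (hto : TotallyOrderedTSF k) (a b : k) :
    a + b = a ∨ a + b = b :=
  (hto a b).symm.imp (fun h => (add_comm a b).trans h) id

theorem TotallyOrderedTSF.eq_of_eq_mul_add (hto : TotallyOrderedTSF k) {a b c : k}
    (h : b = a * b + c) (ha : a ≠ 1) : b = c := by
  rcases hto.add_eq_or (a * b) c with hab | hc
  · have hb : b = a * b := h.trans hab
    by_cases hb0 : b = 0
    · have hc0 : tle c 0 := by rw [← hb0]; exact h ▸ tle_add_right (a * b) c
      exact hb0.trans (hc0.antisymm (zero_tle c)).symm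
    · refine absurd ?_ ha
      calc a = a * b * tinv b := by rw [mul_assoc, mul_tinv hb0, mul_one]
        _ = 1 := by rw [← hb, mul_tinv hb0]
  · exact h.trans hc

end TotalOrder

section PreReflexive

variable {k M : Type*} [TropSemifield k] [TropSemigroup M] [TropModule k M]

theorem eq_of_forall_dual_eq (hpre : Function.Injective (iotaFun k M)) {v w : M}
    (h : ∀ ξ : TropHom k M k, ξ.toFun v = ξ.toFun w) : v = w :=
  hpre (TropHom.ext' h)

theorem tle_of_forall_dual_tle (hpre : Function.Injective (iotaFun k M)) {v w : M}
    (h : ∀ ξ : TropHom k M k, tle (ξ.toFun v) (ξ.toFun w)) : tle v w :=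
  eq_of_forall_dual_eq hpre fun ξ => (ξ.map_add' v w).trans (h ξ)

theorem exists_dual_ne_zero (hpre : Function.Injective (iotaFun k M)) {e : M} (he : e ≠ 0) :
    ∃ ξ : TropHom k M k, ξ.toFun e ≠ 0 := by
  by_contra! h
  exact he (eq_of_forall_dual_eq hpre fun ξ => (h ξ).trans ξ.map_zero'.symm)

theorem tle_of_smul_tle_smul (hpre : Function.Injective (iotaFun k M)) {e : M} (he : e ≠ 0)
    {a b : k} (h : tle (a • e) (b • e)) : tle a b := by
  obtain ⟨ξ, hξ⟩ := exists_dual_ne_zero hpre he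
  have h' := ξ.monotone h
  rw [ξ.map_smul', ξ.map_smul', smul_eq_mul, smul_eq_mul] at h'
  simpa only [mul_assoc, mul_tinv hξ, mul_one] using h'.mul_right (tinv (ξ.toFun e))

theorem eq_of_eq_smul_add (hto : TotallyOrderedTSF k) (hpre : Function.Injective (iotaFun k M))
    {a : k} {e r : M} (h : e = a • e + r) (ha : a ≠ 1) : e = r :=
  eq_of_forall_dual_eq hpre fun ξ =>
    hto.eq_of_eq_mul_add (by rw [← smul_eq_mul, ← ξ.map_smul', ← ξ.map_add', ← h]) ha

end PreReflexive

section Generation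

variable {k M : Type*} [TropSemifield k] [TropSemigroup M] [TropModule k M]

theorem TGenerates.exists_sum_smul {S : Finset M} (hS : TGenerates k (↑S : Set M)) (v : M) :
    ∃ c : M → k, v = ∑ s ∈ S, c s • s := by
  classical
  obtain ⟨r, a, x, hx, hv⟩ := hS v
  refine ⟨fun s => ∑ i with x i = s, a i, ?_⟩
  have hfiber : ∀ s ∈ S, (∑ i with x i = s, a i) • s = ∑ i with x i = s, a i • x i :=
    fun s _ => by
      rw [sum_tsmul]
      exact Finset.sum_congr rfl fun i hi => by rw [(Finset.mem_filter.mp hi).2]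
  rw [Finset.sum_congr rfl hfiber, Finset.sum_fiberwise_of_maps_to (fun i _ => hx i), hv]

theorem tgenerates_of_forall_exists_sum_smul {S : Finset M}
    (h : ∀ v : M, ∃ c : M → k, v = ∑ s ∈ S, c s • s) : TGenerates k (↑S : Set M) := by
  intro v
  obtain ⟨c, hc⟩ := h v
  refine ⟨S.card, fun i => c (S.equivFin.symm i), fun i => S.equivFin.symm i,
    fun i => (S.equivFin.symm i).2, ?_⟩
  rw [hc, ← Finset.sum_coe_sort S (fun s => c s • s)]
  exact (Equiv.sum_comp S.equivFin.symm (fun s : S => c s • (s : M))).symm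

theorem TGenerates.erase [DecidableEq M] {S : Finset M} (hS : TGenerates k (↑S : Set M))
    {e : M} (he : e ∈ S) {d : M → k} (hd : e = ∑ s ∈ S.erase e, d s • s) :
    TGenerates k (↑(S.erase e) : Set M) := by
  refine tgenerates_of_forall_exists_sum_smul fun v => ?_
  obtain ⟨c, hc⟩ := hS.exists_sum_smul v
  refine ⟨fun s => c e * d s + c s, ?_⟩
  have hexpand : ∀ s ∈ S.erase e, (c e * d s + c s) • s = c e • d s • s + c s • s :=
    fun s _ => by rw [TropModule.add_smul, TropModule.mul_smul]
  rw [Finset.sum_congr rfl hexpand, Finset.sum_add_distrib, ← tsmul_sum, ← hd,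
    Finset.add_sum_erase S (fun s => c s • s) he, hc]

theorem exists_minimal_tgenerates [DecidableEq M] (hfg : TFG k M) :
    ∃ S : Finset M, TGenerates k (↑S : Set M) ∧
      ∀ e ∈ S, ¬ TGenerates k (↑(S.erase e) : Set M) := by
  obtain ⟨S, hS, hmin⟩ :=
    (measure (Finset.card (α := M))).wf.has_min {S | TGenerates k (↑S : Set M)} hfg
  exact ⟨S, hS, fun e he hgen => hmin _ hgen (Finset.card_erase_lt_of_mem he)⟩

theorem ne_zero_of_mem_minimal [DecidableEq M] {S : Finset M}
    (hS : TGenerates k (↑S : Set M)) (hmin : ∀ e ∈ S, ¬ TGenerates k (↑(S.erase e) : Set M))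
    {e : M} (he : e ∈ S) : e ≠ 0 := by
  rintro rfl
  refine hmin 0 he (hS.erase he (d := 0) ?_)
  simp only [Pi.zero_apply, TropModule.zero_smul, Finset.sum_const_zero]

theorem TExtremal.of_mem_minimal [DecidableEq M] (hto : TotallyOrderedTSF k)
    (hpre : Function.Injective (iotaFun k M)) {S : Finset M} (hS : TGenerates k (↑S : Set M))
    (hmin : ∀ e ∈ S, ¬ TGenerates k (↑(S.erase e) : Set M)) {e : M} (he : e ∈ S) :
    TExtremal e := by
  refine ⟨ne_zero_of_mem_minimal hS hmin he, fun x y hxy => ?_⟩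
  obtain ⟨cx, hcx⟩ := hS.exists_sum_smul x
  obtain ⟨cy, hcy⟩ := hS.exists_sum_smul y
  have hsum : e = (cx e + cy e) • e + ∑ s ∈ S.erase e, (cx s + cy s) • s := by
    rw [Finset.add_sum_erase S (fun s => (cx s + cy s) • s) he, ← hxy, hcx, hcy,
      ← Finset.sum_add_distrib]
    exact Finset.sum_congr rfl fun s _ => (TropModule.add_smul _ _ _).symm
  by_cases hc : cx e + cy e = 1
  · -- the coefficient of `e` in `x` or in `y` is `1`, so `e ≤ x` or `e ≤ y`
    have eq_of_coeff_eq_one : ∀ {z : M} {c : M → k}, z = ∑ s ∈ S, c s • s → c e = 1 →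
        tle z e → z = e := by
      intro z c hz hce hze
      refine hze.antisymm ?_
      have he_tle := tle_sum_of_mem (fun s => c s • s) he
      rwa [hce, TropModule.one_smul, ← hz] at he_tle
    rcases hto.add_eq_or (cx e) (cy e) with h | h
    · exact .inl (eq_of_coeff_eq_one hcx (h ▸ hc) (hxy ▸ tle_add_left x y))
    · exact .inr (eq_of_coeff_eq_one hcy (h ▸ hc) (hxy ▸ tle_add_right x y))
  · exact absurd (hS.erase he (eq_of_eq_smul_add hto hpre hsum hc)) (hmin e he)

end Generation

section DualElement

variable {k M : Type*} [TropSemifield k] [TropSemigroup M] [TropModule k M]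

theorem IsDualElement.apply_smul {e : M} {η : TropHom k M k} (h : IsDualElement e η) (a : k) :
    η.toFun (a • e) = a := by
  rw [η.map_smul', h.1, smul_eq_mul, mul_one]

theorem IsDualElement.tle_apply {e : M} {η : TropHom k M k} (h : IsDualElement e η) {a : k}
    {v : M} (ha : tle (a • e) v) : tle a (η.toFun v) :=
  h.apply_smul a ▸ η.monotone ha

theorem IsDualElement.smul_tle (hpre : Function.Injective (iotaFun k M)) {e : M}
    {η : TropHom k M k} (h : IsDualElement e η) (v : M) : tle (η.toFun v • e) v :=
  tle_of_forall_dual_tle hpre fun ξ => by rw [ξ.map_smul']; exact h.2 v ξ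

/-- For extremal `e`, `v ↦ s` is the dual element of `e`. -/
def IsGreatestCoeff (e v : M) (s : k) : Prop :=
  tle (s • e) v ∧ ∀ a : k, tle (a • e) v → tle a s

theorem IsGreatestCoeff.unique {e v : M} {s t : k} (hs : IsGreatestCoeff e v s)
    (ht : IsGreatestCoeff e v t) : s = t :=
  (ht.2 s hs.1).antisymm (hs.2 t ht.1)

theorem exists_isGreatestCoeff (hqc : QuasiCompleteTSF k)
    (hpre : Function.Injective (iotaFun k M)) {e : M} (he : e ≠ 0) (v : M) :
    ∃ s : k, IsGreatestCoeff e v s := by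
  have bound : ∀ ξ : TropHom k M k, ξ.toFun e ≠ 0 → ∀ a : k, tle (a • e) v →
      tle a (ξ.toFun v * tinv (ξ.toFun e)) := fun ξ hξ a ha =>
    (tle_mul_tinv_iff hξ).2 (by simpa only [ξ.map_smul', smul_eq_mul] using ξ.monotone ha)
  obtain ⟨ξ₀, hξ₀⟩ := exists_dual_ne_zero hpre he
  -- `s` is the infimum of the upper bounds of `{a | a ⊙ e ≤ v}`
  obtain ⟨s, hs_lower, hs_greatest⟩ :=
    hqc {d | ∀ a : k, tle (a • e) v → tle a d} ⟨_, bound ξ₀ hξ₀⟩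
  refine ⟨s, tle_of_forall_dual_tle hpre fun ξ => ?_, fun a ha => hs_greatest a fun d hd => hd a ha⟩
  rw [ξ.map_smul']
  by_cases hξ : ξ.toFun e = 0
  · rw [hξ, smul_zero]
    exact zero_tle _
  · exact (tle_mul_tinv_iff hξ).1 (hs_lower _ (bound ξ hξ))

theorem isGreatestCoeff_zero (hpre : Function.Injective (iotaFun k M)) {e : M} (he : e ≠ 0) :
    IsGreatestCoeff e (0 : M) (0 : k) := by
  refine ⟨(TropModule.zero_smul (k := k) e).symm ▸ tle_refl _, fun a ha => ?_⟩
  refine tle_of_smul_tle_smul hpre he ?_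
  rw [TropModule.zero_smul]
  exact ha

theorem isGreatestCoeff_self (hpre : Function.Injective (iotaFun k M)) {e : M} (he : e ≠ 0) :
    IsGreatestCoeff e e (1 : k) :=
  ⟨(TropModule.one_smul (k := k) e).symm ▸ tle_refl e, fun _ ha =>
    tle_of_smul_tle_smul hpre he ((TropModule.one_smul (k := k) e).symm ▸ ha)⟩

theorem IsGreatestCoeff.smul (hpre : Function.Injective (iotaFun k M)) {e v : M} (he : e ≠ 0)
    {s : k} (h : IsGreatestCoeff e v s) (b : k) : IsGreatestCoeff e (b • v) (b * s) := by
  refine ⟨TropModule.mul_smul b s e ▸ h.1.smul_left b, fun a ha => ?_⟩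
  by_cases hb : b = 0
  · subst hb
    rw [zero_mul]
    exact (isGreatestCoeff_zero hpre he).2 a (TropModule.zero_smul (k := k) v ▸ ha)
  · have h₁ : tle ((tinv b * a) • e) v := by
      rw [TropModule.mul_smul]
      simpa only [tinv_smul_smul hb] using ha.smul_left (tinv b)
    have h₂ := (h.2 _ h₁).mul_right b
    rwa [mul_comm (tinv b) a, mul_assoc, mul_comm (tinv b) b, mul_tinv hb, mul_one,
      mul_comm s b] at h₂

theorem TExtremal.smul {e : M} (he : TExtremal e) {a : k} (ha : a ≠ 0) : TExtremal (a • e) := by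
  refine ⟨fun h => he.1 ?_, fun x y hxy => ?_⟩
  · rw [← tinv_smul_smul ha e, h, TropModule.smul_zero]
  · have hsplit : tinv a • x + tinv a • y = e := by
      rw [← TropModule.smul_add, hxy, tinv_smul_smul ha]
    refine (he.2 _ _ hsplit).imp (fun hx => ?_) (fun hy => ?_)
    · rw [← hx, smul_tinv_smul ha]
    · rw [← hy, smul_tinv_smul ha]

theorem TExtremal.tle_or_tle_of_tle_add (hM : Straight M) {x : M} (hx : TExtremal x) {v w : M}
    (h : tle x (v + w)) : tle x v ∨ tle x w := by
  obtain ⟨z₁, hz₁⟩ := hM.1 v x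
  obtain ⟨z₂, hz₂⟩ := hM.1 w x
  have hinf := hM.2 v w x z₁ z₂ hz₁ hz₂
  have hz : z₁ + z₂ = x := hinf.2.1.antisymm (hinf.2.2 x h (tle_refl x))
  refine (hx.2 z₁ z₂ hz).imp (fun h₁ => ?_) (fun h₂ => ?_)
  · exact h₁ ▸ hz₁.1
  · exact h₂ ▸ hz₂.1

theorem IsGreatestCoeff.add (hM : Straight M) {e : M} (he : TExtremal e) {v w : M} {s t : k}
    (hs : IsGreatestCoeff e v s) (ht : IsGreatestCoeff e w t) :
    IsGreatestCoeff e (v + w) (s + t) := by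
  refine ⟨TropModule.add_smul s t e ▸ add_tle (hs.1.trans (tle_add_left v w))
    (ht.1.trans (tle_add_right v w)), fun a ha => ?_⟩
  by_cases ha0 : a = 0
  · exact ha0 ▸ zero_tle _
  rcases (he.smul ha0).tle_or_tle_of_tle_add hM ha with hv | hw
  · exact (hs.2 a hv).trans (tle_add_left s t)
  · exact (ht.2 a hw).trans (tle_add_right s t)

theorem exists_isDualElement (hqc : QuasiCompleteTSF k) (hpre : Function.Injective (iotaFun k M))
    (hM : Straight M) {e : M} (he : TExtremal e) : ∃ η : TropHom k M k, IsDualElement e η := by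
  choose s hs using exists_isGreatestCoeff hqc hpre he.1
  let η : TropHom k M k :=
    { toFun := s
      map_zero' := (hs 0).unique (isGreatestCoeff_zero hpre he.1)
      map_add' := fun v w => (hs (v + w)).unique ((hs v).add hM he (hs w))
      map_smul' := fun b v => (hs (b • v)).unique ((hs v).smul hpre he.1 b) }
  refine ⟨η, (hs e).unique (isGreatestCoeff_self hpre he.1), fun v ξ => ?_⟩
  simpa only [ξ.map_smul', smul_eq_mul] using ξ.monotone (hs v).1

theorem eq_sum_dual_smul (hpre : Function.Injective (iotaFun k M)) {S : Finset M}
    {η : M → TropHom k M k} (hS : TGenerates k (↑S : Set M))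
    (hη : ∀ e ∈ S, IsDualElement e (η e)) (v : M) : v = ∑ e ∈ S, (η e).toFun v • e := by
  refine tle.antisymm ?_ (sum_tle fun e he => (hη e he).smul_tle hpre v)
  obtain ⟨c, hc⟩ := hS.exists_sum_smul v
  conv_lhs => rw [hc]
  refine sum_tle_sum fun e he => ((hη e he).tle_apply ?_).smul_right e
  rw [hc]
  exact tle_sum_of_mem (fun e => c e • e) he

end DualElement

theorem surjective_iotaFun_of_eq_sum {k M : Type*} [TropSemifield k] [TropSemigroup M]
    [TropModule k M] (S : Finset M) (η : M → TropHom k M k)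
    (h : ∀ v : M, v = ∑ e ∈ S, (η e).toFun v • e) : Function.Surjective (iotaFun k M) := by
  have hξ : ∀ ξ : TropHom k M k, ξ = ∑ e ∈ S, ξ.toFun e • η e := fun ξ =>
    TropHom.ext' fun v => by
      rw [TropHom.sum_toFun]
      conv_lhs => rw [h v, ξ.map_sum]
      refine Finset.sum_congr rfl fun e _ => ?_
      rw [ξ.map_smul']
      exact mul_comm _ _
  intro φ
  refine ⟨∑ e ∈ S, φ.toFun (η e) • e, TropHom.ext' fun ξ => ?_⟩
  show ξ.toFun (∑ e ∈ S, φ.toFun (η e) • e) = φ.toFun ξ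
  conv_rhs => rw [hξ ξ, φ.map_sum]
  rw [ξ.map_sum]
  refine Finset.sum_congr rfl fun e _ => ?_
  rw [ξ.map_smul', φ.map_smul']
  exact mul_comm _ _

theorem stmt3_general {k M : Type*} [TropSemifield k] [TropSemigroup M] [TropModule k M]
    (hto : TotallyOrderedTSF k) (hqc : QuasiCompleteTSF k)
    (hfg : TFG k M) (hstraight : Straight M)
    (hpre : Function.Injective (iotaFun k M)) :
    Function.Bijective (iotaFun k M) := by
  classical
  obtain ⟨S, hS, hmin⟩ := exists_minimal_tgenerates hfg
  have hdual : ∀ e : M, ∃ η : TropHom k M k, e ∈ S → IsDualElement e η := fun e => by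
    by_cases he : e ∈ S
    · obtain ⟨η, hη⟩ :=
        exists_isDualElement hqc hpre hstraight (TExtremal.of_mem_minimal hto hpre hS hmin he)
      exact ⟨η, fun _ => hη⟩
    · exact ⟨0, fun h => absurd h he⟩
  choose η hη using hdual
  exact ⟨hpre, surjective_iotaFun_of_eq_sum S η (eq_sum_dual_smul hpre hS hη)⟩

theorem stmt3 {k M : Type*} [TropSemifield k] [TropSemigroup M] [TropModule k M]
    (hto : TotallyOrderedTSF k) (hqc : QuasiCompleteTSF k) (hrat : RationalTSF k)
    (hfg : TFG k M) (hstraight : Straight M)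
    (hpre : Function.Injective (iotaFun k M)) :
    Function.Bijective (iotaFun k M) :=
  stmt3_general hto hqc hfg hstraight hpre
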